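/- arXiv:1002.0757 — 3 statements merged into one kernel-verified Lean document; each statement's English description precedes it below -/
import Mathlib

section
/- Let X, X_1, X_2, … be i.i.d. real-valued random variables, let n_0 > 0 and x_0 ∈ ℝ be constants, define μ̂_n := (n_0·x_0 + Σ_{i=1}^n X_i)/(n + n_0) and μ* := E[X]. If the first k moments of X exist (k a positive integer), then E[(μ̂_n − μ*)^k] = O(n^{−⌈k/2⌉}) as n → ∞. -/
open MeasureTheory Filter Real Asymptotics ProbabilityTheory Finset

/-!
Write `Y i = X i - μ*`, `c = n₀ (x₀ - μ*)` and `S n = ∑_{i<n} Y i`. Then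
`μ̂_n - μ* = (c + S n) / (n + n₀)`, so by the binomial theorem it suffices that
`E[(S n)^j] = O(n^⌊j/2⌋)` for `j ≤ k`; dividing by `(n + n₀)^k` then gives
`O(n^(⌊k/2⌋ - k)) = O(n^-⌈k/2⌉)`.

Expanding `(S n)^j` over the maps `g : Fin j → {0, …, n-1}`, independence and identical
distribution turn the expectation of the term of `g` into `∏_a E[Y^|g⁻¹(a)|]`. Since `E[Y] = 0`
this vanishes as soon as some value of `g` is taken exactly once; the remaining maps take at most
`⌊j/2⌋` values, so there are `O(n^⌊j/2⌋)` of them, and each term is at most `(1 + E|Y|^j)^j`.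
-/

theorem pow_le_one_add_pow {R : Type*} [Semiring R] [LinearOrder R] [IsOrderedRing R] {x : R}
    (hx : 0 ≤ x) {m j : ℕ} (hmj : m ≤ j) : x ^ m ≤ 1 + x ^ j := by
  rcases le_total x 1 with hx1 | hx1
  · exact (pow_le_one₀ hx hx1).trans (le_add_of_nonneg_right (pow_nonneg hx j))
  · exact (pow_le_pow_right₀ hx1 hmj).trans (le_add_of_nonneg_left zero_le_one)

section Combinatorics

variable {ι α : Type*} [Fintype ι] [DecidableEq α]

theorem two_mul_card_image_le_card_of_two_le_card_fiber {g : ι → α}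
    (hg : ∀ t, 2 ≤ #{u | g u = g t}) : 2 * #(univ.image g) ≤ Fintype.card ι :=
  calc 2 * #(univ.image g) = ∑ _a ∈ univ.image g, 2 := by rw [sum_const, smul_eq_mul, mul_comm]
    _ ≤ ∑ a ∈ univ.image g, #{u | g u = a} := sum_le_sum fun a ha => by
        obtain ⟨t, -, rfl⟩ := mem_image.1 ha
        exact hg t
    _ = Fintype.card ι := (card_eq_sum_card_image g univ).symm

theorem card_filter_powerset_card_le_le (s : Finset α) (r : ℕ) (hs : 1 ≤ #s) :
    #{T ∈ s.powerset | #T ≤ r} ≤ (r + 1) * #s ^ r :=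
  calc #{T ∈ s.powerset | #T ≤ r} ≤ #((range (r + 1)).biUnion s.powersetCard) :=
        card_le_card fun T hT => by
          rw [mem_filter, mem_powerset] at hT
          exact mem_biUnion.2
            ⟨#T, mem_range.2 (Nat.lt_succ_of_le hT.2), mem_powersetCard.2 ⟨hT.1, rfl⟩⟩
    _ ≤ ∑ t ∈ range (r + 1), #(s.powersetCard t) := card_biUnion_le
    _ ≤ ∑ _t ∈ range (r + 1), #s ^ r := sum_le_sum fun t ht => by
        rw [card_powersetCard]
        exact (Nat.choose_le_pow _ _).trans
          (Nat.pow_le_pow_right hs (Nat.lt_succ_iff.1 (mem_range.1 ht)))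
    _ = (r + 1) * #s ^ r := by rw [sum_const, card_range, smul_eq_mul]

theorem card_piFinset_filter_two_le_card_fiber_le (s : Finset α) (hs : 1 ≤ #s) (j : ℕ) :
    #{g ∈ Fintype.piFinset fun _ : Fin j => s | ∀ t, 2 ≤ #{u | g u = g t}} ≤
      (j / 2 + 1) * (j / 2) ^ j * #s ^ (j / 2) := by
  set r := j / 2
  calc _ ≤ #({T ∈ s.powerset | #T ≤ r}.biUnion fun T => Fintype.piFinset fun _ : Fin j => T) :=
        card_le_card fun g hg => by
          obtain ⟨hgs, hfib⟩ := mem_filter.1 hg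
          have := two_mul_card_image_le_card_of_two_le_card_fiber hfib
          rw [Fintype.card_fin] at this
          refine mem_biUnion.2 ⟨univ.image g, mem_filter.2 ⟨?_, by omega⟩,
            Fintype.mem_piFinset.2 fun t => mem_image_of_mem g (mem_univ t)⟩
          exact mem_powerset.2 (image_subset_iff.2 fun t _ => Fintype.mem_piFinset.1 hgs t)
    _ ≤ ∑ T ∈ {T ∈ s.powerset | #T ≤ r}, #(Fintype.piFinset fun _ : Fin j => T) :=
        card_biUnion_le
    _ ≤ ∑ _T ∈ {T ∈ s.powerset | #T ≤ r}, r ^ j := sum_le_sum fun T hT => by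
        rw [Fintype.card_piFinset, prod_const, card_univ, Fintype.card_fin]
        exact Nat.pow_le_pow_left (mem_filter.1 hT).2 _
    _ ≤ (r + 1) * #s ^ r * r ^ j := by
        rw [sum_const, smul_eq_mul]
        exact Nat.mul_le_mul_right _ (card_filter_powerset_card_le_le s r hs)
    _ = _ := by ring

theorem sum_pow_eq_sum_piFinset_prod_pow_card_fiber {R : Type*} [CommSemiring R] (s : Finset α)
    (y : α → R) (j : ℕ) :
    (∑ a ∈ s, y a) ^ j =
      ∑ g ∈ Fintype.piFinset fun _ : Fin j => s, ∏ a ∈ univ.image g, y a ^ #{t | g t = a} := by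
  rw [← Fin.prod_const, prod_univ_sum]
  exact sum_congr rfl fun g _ => prod_comp y g

end Combinatorics

namespace ProbabilityTheory

variable {Ω ι : Type*} [MeasurableSpace Ω] {P : Measure Ω} [IsProbabilityMeasure P]
  {f : ι → Ω → ℝ}

theorem iIndepFun.integrable_finset_prod (hind : iIndepFun f P) (hm : ∀ i, Measurable (f i))
    {s : Finset ι} (hint : ∀ i ∈ s, Integrable (f i) P) :
    Integrable (fun ω => ∏ i ∈ s, f i ω) P := by
  classical
  induction s using Finset.induction_on with
  | empty => simp
  | insert a s ha ih =>
    have hindep := (hind.indepFun_finsetProd_of_notMem hm ha).symm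
    rw [prod_fn] at hindep
    simp_rw [prod_insert ha]
    exact hindep.integrable_mul (hint a (mem_insert_self a s))
      (ih fun i hi => hint i (mem_insert_of_mem hi))

theorem iIndepFun.integral_finset_prod (hind : iIndepFun f P) (hm : ∀ i, Measurable (f i))
    (s : Finset ι) : ∫ ω, ∏ i ∈ s, f i ω ∂P = ∏ i ∈ s, ∫ ω, f i ω ∂P := by
  classical
  induction s using Finset.induction_on with
  | empty => simp
  | insert a s ha ih =>
    have hindep := (hind.indepFun_finsetProd_of_notMem hm ha).symm
    rw [prod_fn] at hindep
    simp_rw [prod_insert ha]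
    rw [← ih]
    exact hindep.integral_fun_mul_eq_mul_integral (hm a).aestronglyMeasurable
      (Finset.measurable_fun_prod s fun i _ => hm i).aestronglyMeasurable

end ProbabilityTheory

namespace MeasureTheory

variable {Ω : Type*} [MeasurableSpace Ω] {P : Measure Ω} {f : Ω → ℝ}

theorem memLp_of_integrable_abs_pow (hf : AEStronglyMeasurable f P) {k : ℕ} (hk : k ≠ 0)
    (hint : Integrable (fun ω => |f ω| ^ k) P) : MemLp f k P :=
  (integrable_norm_rpow_iff hf (by exact_mod_cast hk) (by simp)).1
    (by simpa [Real.rpow_natCast] using hint)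

theorem MemLp.integrable_abs_pow [IsFiniteMeasure P] {j : ℕ} (hf : MemLp f j P) :
    Integrable (fun ω => |f ω| ^ j) P := by
  simpa only [Real.norm_eq_abs] using hf.integrable_norm_pow'

theorem MemLp.integrable_pow_of_le [IsFiniteMeasure P] {j m : ℕ} (hf : MemLp f j P)
    (hmj : m ≤ j) : Integrable (fun ω => f ω ^ m) P :=
  (hf.mono_exponent (by exact_mod_cast hmj)).integrable_abs_pow.mono'
    (hf.aestronglyMeasurable.pow m) (ae_of_all _ fun ω => by simp)

end MeasureTheory

section Moments

variable {Ω : Type*} [MeasurableSpace Ω] {P : Measure Ω} [IsProbabilityMeasure P]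

theorem abs_integral_pow_le_one_add_integral_abs_pow {f : Ω → ℝ} {j m : ℕ} (hf : MemLp f j P)
    (hmj : m ≤ j) : |∫ ω, f ω ^ m ∂P| ≤ 1 + ∫ ω, |f ω| ^ j ∂P :=
  calc |∫ ω, f ω ^ m ∂P| ≤ ∫ ω, |f ω| ^ m ∂P :=
        abs_integral_le_integral_abs.trans_eq (by simp_rw [abs_pow])
    _ ≤ ∫ ω, (1 + |f ω| ^ j) ∂P :=
        integral_mono (hf.mono_exponent (by exact_mod_cast hmj)).integrable_abs_pow
          ((integrable_const 1).add hf.integrable_abs_pow)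
          fun ω => pow_le_one_add_pow (abs_nonneg _) hmj
    _ = 1 + ∫ ω, |f ω| ^ j ∂P := by
        rw [integral_add (integrable_const 1) hf.integrable_abs_pow, integral_const]
        simp

theorem abs_prod_integral_pow_card_fiber_le {f : Ω → ℝ} {j : ℕ} (hf : MemLp f j P)
    {α : Type*} [DecidableEq α] (g : Fin j → α) :
    |∏ a ∈ univ.image g, ∫ ω, f ω ^ #{t | g t = a} ∂P| ≤ (1 + ∫ ω, |f ω| ^ j ∂P) ^ j := by
  have hB : 1 ≤ 1 + ∫ ω, |f ω| ^ j ∂P :=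
    le_add_of_nonneg_right (integral_nonneg fun ω => by positivity)
  rw [abs_prod]
  calc ∏ a ∈ univ.image g, |∫ ω, f ω ^ #{t | g t = a} ∂P|
      ≤ ∏ _a ∈ univ.image g, (1 + ∫ ω, |f ω| ^ j ∂P) :=
        prod_le_prod (fun _ _ => abs_nonneg _) fun a _ =>
          abs_integral_pow_le_one_add_integral_abs_pow hf ((card_filter_le _ _).trans (by simp))
    _ ≤ (1 + ∫ ω, |f ω| ^ j ∂P) ^ j := by
        rw [prod_const]
        exact pow_le_pow_right₀ hB (card_image_le.trans (by simp))

variable {Y : ℕ → Ω → ℝ} (hm : ∀ i, Measurable (Y i)) (hind : iIndepFun Y P)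
  (hident : ∀ i, IdentDistrib (Y i) (Y 0) P P)
include hm hind hident

theorem integral_prod_pow_eq_prod_integral_pow (s : Finset ℕ) (m : ℕ → ℕ) :
    ∫ ω, ∏ a ∈ s, Y a ω ^ m a ∂P = ∏ a ∈ s, ∫ ω, Y 0 ω ^ m a ∂P := by
  calc ∫ ω, ∏ a ∈ s, Y a ω ^ m a ∂P = ∏ a ∈ s, ∫ ω, Y a ω ^ m a ∂P :=
        (hind.comp (fun a x => x ^ m a) fun _ => measurable_id.pow_const _).integral_finset_prod
          (fun a => (hm a).pow_const _) s
    _ = ∏ a ∈ s, ∫ ω, Y 0 ω ^ m a ∂P :=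
        prod_congr rfl fun a _ => ((hident a).comp (measurable_id.pow_const (m a))).integral_eq

theorem integrable_prod_pow {j : ℕ} (hY : MemLp (Y 0) j P) (s : Finset ℕ) {m : ℕ → ℕ}
    (hmj : ∀ a ∈ s, m a ≤ j) : Integrable (fun ω => ∏ a ∈ s, Y a ω ^ m a) P :=
  (hind.comp (fun a x => x ^ m a) fun _ => measurable_id.pow_const _).integrable_finset_prod
    (fun a => (hm a).pow_const _)
    fun a ha => ((hident a).memLp_iff.2 hY).integrable_pow_of_le (hmj a ha)

theorem integral_sum_pow_eq {j : ℕ} (hY : MemLp (Y 0) j P) (s : Finset ℕ) :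
    ∫ ω, (∑ a ∈ s, Y a ω) ^ j ∂P =
      ∑ g ∈ Fintype.piFinset fun _ : Fin j => s,
        ∏ a ∈ univ.image g, ∫ ω, Y 0 ω ^ #{t | g t = a} ∂P := by
  simp_rw [sum_pow_eq_sum_piFinset_prod_pow_card_fiber]
  rw [integral_finsetSum _ fun g _ => integrable_prod_pow hm hind hident hY _
    fun _ _ => (card_filter_le _ _).trans (by simp)]
  exact sum_congr rfl fun g _ => integral_prod_pow_eq_prod_integral_pow hm hind hident _ _

theorem abs_integral_sum_pow_le {j : ℕ} (hY : MemLp (Y 0) j P) (hzero : ∫ ω, Y 0 ω ∂P = 0)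
    (s : Finset ℕ) :
    |∫ ω, (∑ a ∈ s, Y a ω) ^ j ∂P| ≤
      #{g ∈ Fintype.piFinset (fun _ : Fin j => s) | ∀ t, 2 ≤ #{u | g u = g t}} *
        (1 + ∫ ω, |Y 0 ω| ^ j ∂P) ^ j := by
  rw [integral_sum_pow_eq hm hind hident hY,
    ← sum_filter_of_ne (p := fun g : Fin j → ℕ => ∀ t, 2 ≤ #{u | g u = g t}) fun g _ hg => ?_]
  · refine (abs_sum_le_sum_abs _ _).trans ?_
    rw [← nsmul_eq_mul]
    exact sum_le_card_nsmul _ _ _ fun g _ => abs_prod_integral_pow_card_fiber_le hY g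
  · intro t
    by_contra! ht
    refine hg (prod_eq_zero (mem_image_of_mem g (mem_univ t)) ?_)
    have : 0 < #{u | g u = g t} := card_pos.2 ⟨t, by simp⟩
    simpa [show #{u | g u = g t} = 1 by omega] using hzero

theorem isBigO_integral_sum_range_pow {j : ℕ} (hY : MemLp (Y 0) j P)
    (hzero : ∫ ω, Y 0 ω ∂P = 0) :
    (fun n : ℕ => ∫ ω, (∑ i ∈ range n, Y i ω) ^ j ∂P) =O[atTop] fun n => (n : ℝ) ^ (j / 2) := by
  refine IsBigO.of_bound
    (((j / 2 + 1) * (j / 2) ^ j : ℕ) * (1 + ∫ ω, |Y 0 ω| ^ j ∂P) ^ j) ?_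
  filter_upwards [eventually_ge_atTop 1] with n hn
  have hcount := card_piFinset_filter_two_le_card_fiber_le (range n) (by simpa) j
  rw [card_range] at hcount
  rw [Real.norm_eq_abs, norm_of_nonneg (by positivity)]
  calc _ ≤ _ := abs_integral_sum_pow_le hm hind hident hY hzero (range n)
    _ ≤ (((j / 2 + 1) * (j / 2) ^ j * n ^ (j / 2) : ℕ) : ℝ) * (1 + ∫ ω, |Y 0 ω| ^ j ∂P) ^ j :=
        mul_le_mul_of_nonneg_right (Nat.cast_le.2 hcount)
          (pow_nonneg (by positivity) _)
    _ = _ := by push_cast; ring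

end Moments

theorem isBigO_integral_const_add_pow {Ω : Type*} [MeasurableSpace Ω] {P : Measure Ω}
    [IsFiniteMeasure P] {S : ℕ → Ω → ℝ} {k : ℕ}
    (hS : ∀ n, ∀ j ≤ k, Integrable (fun ω => S n ω ^ j) P)
    (hO : ∀ j ≤ k, (fun n : ℕ => ∫ ω, S n ω ^ j ∂P) =O[atTop] fun n => (n : ℝ) ^ (j / 2))
    (c : ℝ) :
    (fun n : ℕ => ∫ ω, (c + S n ω) ^ k ∂P) =O[atTop] fun n => (n : ℝ) ^ (k / 2) := by
  have hexpand : ∀ n, ∫ ω, (c + S n ω) ^ k ∂P =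
      ∑ i ∈ range (k + 1), c ^ i * k.choose i * ∫ ω, S n ω ^ (k - i) ∂P := by
    intro n
    simp_rw [add_pow]
    rw [integral_finsetSum _ fun i _ => ((hS n _ (Nat.sub_le k i)).const_mul _).mul_const _]
    refine sum_congr rfl fun i _ => ?_
    rw [integral_mul_const, integral_const_mul]
    ring
  have hpow : ∀ j ≤ k,
      (fun n : ℕ => (n : ℝ) ^ (j / 2)) =O[atTop] fun n : ℕ => (n : ℝ) ^ (k / 2) := by
    refine fun j hj => IsBigO.of_bound 1 ?_
    filter_upwards [eventually_ge_atTop 1] with n hn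
    simp only [norm_pow, RCLike.norm_natCast, one_mul]
    exact pow_le_pow_right₀ (by exact_mod_cast hn) (Nat.div_le_div_right hj)
  simp_rw [hexpand]
  exact IsBigO.fun_sum fun i _ =>
    ((hO _ (Nat.sub_le k i)).trans (hpow _ (Nat.sub_le k i))).const_mul_left _

theorem isBigO_integral_const_add_sum_sub_integral_pow {Ω : Type*} [MeasurableSpace Ω]
    {P : Measure Ω} [IsProbabilityMeasure P] {X : ℕ → Ω → ℝ} (hm : ∀ i, Measurable (X i))
    (hind : iIndepFun X P) (hident : ∀ i, IdentDistrib (X i) (X 0) P P) {k : ℕ} (hk : 0 < k)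
    (hX : MemLp (X 0) k P) (c : ℝ) :
    (fun n : ℕ => ∫ ω, (c + ∑ i ∈ range n, (X i ω - ∫ ω', X 0 ω' ∂P)) ^ k ∂P) =O[atTop]
      fun n => (n : ℝ) ^ (k / 2) := by
  set μ := ∫ ω, X 0 ω ∂P
  set Y : ℕ → Ω → ℝ := fun i ω => X i ω - μ
  have hYk : MemLp (Y 0) k P := hX.sub (memLp_const μ)
  have hYm : ∀ i, Measurable (Y i) := fun i => (hm i).sub_const μ
  have hYind : iIndepFun Y P := hind.comp (fun _ x => x - μ) fun _ => measurable_id.sub_const μ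
  have hYident : ∀ i, IdentDistrib (Y i) (Y 0) P P :=
    fun i => (hident i).comp (measurable_id.sub_const μ)
  have hYzero : ∫ ω, Y 0 ω ∂P = 0 := by
    rw [integral_sub (hX.integrable (by exact_mod_cast hk)) (integrable_const μ)]
    simp [μ]
  have hS : ∀ n, MemLp (fun ω => ∑ i ∈ range n, Y i ω) k P :=
    fun n => memLp_finsetSum _ fun i _ => (hYident i).memLp_iff.2 hYk
  exact isBigO_integral_const_add_pow (fun n j hj => (hS n).integrable_pow_of_le hj)
    (fun j hj => isBigO_integral_sum_range_pow hYm hYind hYident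
      (hYk.mono_exponent (by exact_mod_cast hj)) hYzero) c

theorem isBigO_inv_add_const_pow {a : ℝ} (ha : 0 ≤ a) (k : ℕ) :
    (fun n : ℕ => (((n : ℝ) + a) ^ k)⁻¹) =O[atTop] fun n : ℕ => ((n : ℝ) ^ k)⁻¹ := by
  refine IsBigO.of_bound 1 ?_
  filter_upwards [eventually_gt_atTop 0] with n hn
  simp only [norm_inv, norm_pow, Real.norm_eq_abs, Nat.abs_cast, one_mul,
    abs_of_pos (by positivity : (0 : ℝ) < n + a)]
  gcongr
  linarith

/-- **Theorem 3 (deviation of the modified ML estimator; Grünwald–de Rooij).**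
Let `X_0, X_1, X_2, …` be i.i.d. real random variables, let `n₀ > 0` and `x₀` be
constants, define `μ̂_n := (n₀·x₀ + ∑_{i<n} X_i)/(n + n₀)` and `μ* := E[X]`.
If the first `k` moments of `X` exist, then `E[(μ̂_n − μ*)^k] = O(n^{−⌈k/2⌉})`. -/
theorem mlEst_deviation_moment
    {Ω : Type} [MeasurableSpace Ω] (P : Measure Ω) [IsProbabilityMeasure P]
    (X : ℕ → Ω → ℝ) (hmeas : ∀ i, Measurable (X i))
    (hindep : iIndepFun X P)
    (hident : ∀ i, IdentDistrib (X i) (X 0) P P)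
    (n0 : ℝ) (hn0 : 0 < n0) (x0 : ℝ)
    (k : ℕ) (hk : 0 < k)
    (hmom : ∀ j ≤ k, Integrable (fun ω => |X 0 ω| ^ j) P)
    (μstar : ℝ) (hμstar : μstar = ∫ ω, X 0 ω ∂P) :
    (fun n : ℕ =>
        ∫ ω, ((n0 * x0 + ∑ i ∈ Finset.range n, X i ω) / ((n : ℝ) + n0) - μstar) ^ k ∂P)
      =O[atTop] (fun n : ℕ => ((n : ℝ) ^ ((k + 1) / 2 : ℕ))⁻¹) := by
  subst hμstar
  have hXk := memLp_of_integrable_abs_pow (hmeas 0).aestronglyMeasurable hk.ne' (hmom k le_rfl)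
  refine ((isBigO_inv_add_const_pow hn0.le k).mul
    (isBigO_integral_const_add_sum_sub_integral_pow hmeas hindep hident hk hXk
      (n0 * (x0 - ∫ ω, X 0 ω ∂P)))).congr' (Eventually.of_forall fun n => ?_) ?_
  · dsimp only
    rw [← integral_const_mul]
    refine integral_congr_ae (ae_of_all _ fun ω => ?_)
    have hpos : (0 : ℝ) < n + n0 := by positivity
    dsimp only
    rw [sum_sub_distrib, sum_const, card_range, nsmul_eq_mul, ← inv_pow, ← mul_pow]
    field_simp
    ring
  · filter_upwards [eventually_gt_atTop 0] with n hn
    have hsplit : (n : ℝ) ^ k = n ^ (k / 2) * n ^ ((k + 1) / 2) := by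
      rw [← pow_add]
      congr 1
      omega
    rw [hsplit]
    field_simp
end

section
/- Let X, X_1, X_2, … be i.i.d. real-valued random variables, let n_0 > 0 and x_0 ∈ ℝ be constants, define μ̂_n := (n_0·x_0 + Σ_{i=1}^n X_i)/(n + n_0) and μ* := E[X]. Let k ∈ {0, 2, 4, …} be an even nonnegative integer. If the first k moments of X exist, then for every δ > 0, P(|μ̂_n − μ*| ≥ δ) = O(n^{−⌈k/2⌉} δ^{−k}) as n → ∞, uniformly in δ. -/
/-
Write `Y i := X i - μ*`, `S_n := ∑_{i<n} Y i` and `c := n₀ (x₀ - μ*)`; then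
`μ̂_n - μ* = (c + S_n) / (n + n₀)`.
With `k = 2m`, Markov's inequality for `|·|^{2m}` bounds the deviation probability by
`E (c + S_n)^{2m} / ((n + n₀)^{2m} δ^{2m})`, so it suffices that `E (c + S_n)^{2m} = O(n^m)`.
This is proved by induction on `m`: expanding `(c + S_n + Y_n)^{2m+2}` binomially and using the
independence of `S_n` and `Y_n`, the increment `E (c + S_{n+1})^{2m+2} - E (c + S_n)^{2m+2}` only
involves moments of `c + S_n` of order at most `2m` (the term linear in `Y_n` vanishes), hence is
`O(n^m)` by the induction hypothesis; summing over `n` gives `O(n^{m+1})`.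
-/

open MeasureTheory ProbabilityTheory
open scoped ENNReal

lemma abs_pow_le_one_add_abs_pow (x : ℝ) {j k : ℕ} (hjk : j ≤ k) : |x| ^ j ≤ 1 + |x| ^ k := by
  rcases le_total |x| 1 with h | h
  · linarith [pow_le_one₀ (abs_nonneg x) h (n := j), pow_nonneg (abs_nonneg x) k]
  · linarith [pow_le_pow_right₀ h hjk]

lemma sum_range_choose_le_two_pow (K s : ℕ) (hs : s ≤ K + 1) :
    ∑ j ∈ Finset.range s, (K.choose j : ℝ) ≤ 2 ^ K := by
  have : ∑ j ∈ Finset.range s, K.choose j ≤ 2 ^ K :=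
    (Finset.sum_le_sum_of_subset (Finset.range_subset_range.mpr hs)).trans_eq
      (Nat.sum_range_choose K)
  exact_mod_cast this

lemma le_mul_succ_pow_of_le_add {u : ℕ → ℝ} {b : ℝ} {m : ℕ} (hu0 : 0 ≤ u 0) (hb : 0 ≤ b)
    (hstep : ∀ n : ℕ, u (n + 1) ≤ u n + b * ((n : ℝ) + 1) ^ m) (n : ℕ) :
    u n ≤ (u 0 + b) * ((n : ℝ) + 1) ^ (m + 1) := by
  have hsum : u n ≤ u 0 + b * n * ((n : ℝ) + 1) ^ m := by
    induction n with
    | zero => simp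
    | succ n ih =>
      have hmono : ((n : ℝ) + 1) ^ m ≤ ((n : ℝ) + 1 + 1) ^ m := by gcongr; linarith
      push_cast
      nlinarith [hstep n, mul_le_mul_of_nonneg_left hmono (by positivity : 0 ≤ b * n)]
  have hone : 1 ≤ ((n : ℝ) + 1) ^ (m + 1) := one_le_pow₀ (by linarith [n.cast_nonneg (α := ℝ)])
  have hn : b * n * ((n : ℝ) + 1) ^ m ≤ b * ((n : ℝ) + 1) ^ (m + 1) := by
    rw [pow_succ', ← mul_assoc]; gcongr; linarith
  linarith [le_mul_of_one_le_right hu0 hone]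

lemma succ_pow_div_add_pow_le {x n0 : ℝ} (hx : 1 ≤ x) (hn0 : 0 < n0) (m : ℕ) :
    (x + 1) ^ m / (x + n0) ^ (2 * m) ≤ 2 ^ m * (x ^ m)⁻¹ := by
  calc (x + 1) ^ m / (x + n0) ^ (2 * m) ≤ (2 * x) ^ m / x ^ (2 * m) := by
        gcongr <;> linarith
    _ = 2 ^ m * (x ^ m)⁻¹ := by
        have : x ^ m ≠ 0 := by positivity
        rw [mul_pow, pow_mul']
        field_simp

lemma add_sum_div_sub_eq (x : ℕ → ℝ) (n : ℕ) {n0 : ℝ} (hn0 : (n : ℝ) + n0 ≠ 0) (x0 μ : ℝ) :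
    (n0 * x0 + ∑ i ∈ Finset.range n, x i) / ((n : ℝ) + n0) - μ =
      (n0 * (x0 - μ) + ∑ i ∈ Finset.range n, (x i - μ)) / ((n : ℝ) + n0) := by
  rw [Finset.sum_sub_distrib, Finset.sum_const, Finset.card_range, nsmul_eq_mul]
  field_simp
  ring

section Moments

variable {Ω : Type*} [MeasurableSpace Ω] {P : Measure Ω}

lemma MeasureTheory.MemLp.integrable_pow [IsFiniteMeasure P] {f : Ω → ℝ} {K j : ℕ}
    (hf : MemLp f K P) (hj : j ≤ K) : Integrable (fun ω => f ω ^ j) P := by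
  have := (hf.mono_exponent (by exact_mod_cast hj : (j : ℝ≥0∞) ≤ K)).integrable_norm_pow'
  exact (integrable_norm_iff (hf.aestronglyMeasurable.pow j)).mp (by simpa [norm_pow] using this)

lemma memLp_of_integrable_abs_pow {f : Ω → ℝ} {K : ℕ} (hf : AEStronglyMeasurable f P)
    (hK : Integrable (fun ω => |f ω| ^ K) P) : MemLp f K P := by
  rcases Nat.eq_zero_or_pos K with rfl | hK0
  · simpa using hf
  rw [← integrable_norm_rpow_iff hf (by exact_mod_cast hK0.ne') (by simp)]
  simpa using hK

lemma measureReal_le_integral_abs_pow_div [IsFiniteMeasure P] {Z : Ω → ℝ} (k : ℕ)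
    (hZ : Integrable (fun ω => |Z ω| ^ k) P) {δ : ℝ} (hδ : 0 < δ) :
    P.real {ω | δ ≤ |Z ω|} ≤ (∫ ω, |Z ω| ^ k ∂P) / δ ^ k := by
  rw [le_div_iff₀' (pow_pos hδ k)]
  refine le_trans ?_ (mul_meas_ge_le_integral_of_nonneg (ae_of_all _ fun ω => by positivity) hZ
    (δ ^ k))
  exact mul_le_mul_of_nonneg_left
    (measureReal_mono fun ω (hω : δ ≤ |Z ω|) => pow_le_pow_left₀ hδ.le hω k) (by positivity)

lemma measureReal_abs_div_ge_le [IsFiniteMeasure P] {Z : Ω → ℝ} {m : ℕ}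
    (hZ : MemLp Z (2 * m : ℕ) P) (d : ℝ) {δ : ℝ} (hδ : 0 < δ) :
    P.real {ω | δ ≤ |Z ω / d|} ≤ (∫ ω, Z ω ^ (2 * m) ∂P) / d ^ (2 * m) / δ ^ (2 * m) := by
  have hpow : ∀ ω, |Z ω / d| ^ (2 * m) = Z ω ^ (2 * m) / d ^ (2 * m) := fun ω => by
    rw [(even_two_mul m).pow_abs, div_pow]
  calc P.real {ω | δ ≤ |Z ω / d|} ≤ (∫ ω, |Z ω / d| ^ (2 * m) ∂P) / δ ^ (2 * m) :=
        measureReal_le_integral_abs_pow_div _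
          (by simpa only [hpow] using (hZ.integrable_pow le_rfl).div_const _) hδ
    _ = _ := by simp_rw [hpow, integral_div]

variable [IsProbabilityMeasure P]

-- `f` need not be integrable: otherwise both integrals are `0`
lemma integral_sub_integral_eq_zero (f : Ω → ℝ) :
    ∫ ω, (f ω - ∫ ω', f ω' ∂P) ∂P = 0 := by
  by_cases hf : Integrable f P
  · simp [integral_sub hf (integrable_const _)]
  · simp [integral_undef hf]

lemma abs_integral_pow_le {f : Ω → ℝ} {K j : ℕ} (hf : MemLp f K P) (hj : j ≤ K) :
    |∫ ω, f ω ^ j ∂P| ≤ 1 + ∫ ω, |f ω| ^ K ∂P := by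
  have hK : Integrable (fun ω => |f ω| ^ K) P := by simpa using hf.integrable_norm_pow'
  calc |∫ ω, f ω ^ j ∂P| ≤ ∫ ω, |f ω| ^ j ∂P := by
        simpa only [abs_pow] using abs_integral_le_integral_abs (f := fun ω => f ω ^ j)
    _ ≤ ∫ ω, (1 + |f ω| ^ K) ∂P :=
        integral_mono (by simpa using (hf.integrable_pow hj).abs)
          ((integrable_const 1).add hK) fun ω => abs_pow_le_one_add_abs_pow _ hj
    _ = 1 + ∫ ω, |f ω| ^ K ∂P := by simp [integral_add (integrable_const 1) hK]

lemma ProbabilityTheory.IndepFun.integral_add_pow {T Y : Ω → ℝ} {K : ℕ} (hTY : IndepFun T Y P)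
    (hT : MemLp T K P) (hY : MemLp Y K P) :
    ∫ ω, (T ω + Y ω) ^ K ∂P =
      ∑ j ∈ Finset.range (K + 1),
        (∫ ω, T ω ^ j ∂P) * (∫ ω, Y ω ^ (K - j) ∂P) * (K.choose j : ℝ) := by
  simp_rw [add_pow]
  rw [integral_finsetSum]
  · refine Finset.sum_congr rfl fun j hj => ?_
    have hjK : j ≤ K := Nat.lt_succ_iff.mp (Finset.mem_range.mp hj)
    rw [integral_mul_const]
    exact congrArg (· * _) <| (hTY.comp (measurable_id.pow_const j)
      (measurable_id.pow_const (K - j))).integral_mul_eq_mul_integral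
        (hT.integrable_pow hjK).aestronglyMeasurable
        (hY.integrable_pow (Nat.sub_le K j)).aestronglyMeasurable
  · intro j hj
    have hjK : j ≤ K := Nat.lt_succ_iff.mp (Finset.mem_range.mp hj)
    exact ((hTY.comp (measurable_id.pow_const j) (measurable_id.pow_const (K - j))).integrable_mul
      (hT.integrable_pow hjK) (hY.integrable_pow (Nat.sub_le K j))).mul_const _

lemma ProbabilityTheory.IndepFun.integral_add_pow_le {T Y : Ω → ℝ} {m : ℕ} (hTY : IndepFun T Y P)
    (hT : MemLp T (2 * m + 2 : ℕ) P) (hY : MemLp Y (2 * m + 2 : ℕ) P) (hY0 : ∫ ω, Y ω ∂P = 0) :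
    ∫ ω, (T ω + Y ω) ^ (2 * m + 2) ∂P ≤ ∫ ω, T ω ^ (2 * m + 2) ∂P +
      2 ^ (2 * m + 2) * ((1 + ∫ ω, |T ω| ^ (2 * m) ∂P) * (1 + ∫ ω, |Y ω| ^ (2 * m + 2) ∂P)) := by
  have hT' : MemLp T (2 * m : ℕ) P :=
    hT.mono_exponent (by exact_mod_cast (by omega : 2 * m ≤ 2 * m + 2))
  have hlower : ∑ j ∈ Finset.range (2 * m + 1),
      (∫ ω, T ω ^ j ∂P) * (∫ ω, Y ω ^ (2 * m + 2 - j) ∂P) * ((2 * m + 2).choose j : ℝ) ≤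
      2 ^ (2 * m + 2) * ((1 + ∫ ω, |T ω| ^ (2 * m) ∂P) * (1 + ∫ ω, |Y ω| ^ (2 * m + 2) ∂P)) := by
    calc _ ≤ ∑ j ∈ Finset.range (2 * m + 1), ((2 * m + 2).choose j : ℝ) *
          ((1 + ∫ ω, |T ω| ^ (2 * m) ∂P) * (1 + ∫ ω, |Y ω| ^ (2 * m + 2) ∂P)) := by
          refine Finset.sum_le_sum fun j hj => ?_
          have hj : j ≤ 2 * m := Nat.lt_succ_iff.mp (Finset.mem_range.mp hj)
          rw [mul_comm _ (Nat.cast _)]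
          refine mul_le_mul_of_nonneg_left ?_ (Nat.cast_nonneg _)
          exact (le_abs_self _).trans <| (abs_mul _ _).trans_le <|
            mul_le_mul (abs_integral_pow_le hT' hj) (abs_integral_pow_le hY (Nat.sub_le _ _))
              (abs_nonneg _) (by positivity)
      _ ≤ _ := by
          rw [← Finset.sum_mul]
          exact mul_le_mul_of_nonneg_right (sum_range_choose_le_two_pow _ _ (by omega))
            (by positivity)
  -- the term linear in `Y` vanishes, all remaining ones only involve moments of `T` of order `≤ 2m`
  rw [hTY.integral_add_pow hT hY, Finset.sum_range_succ, Finset.sum_range_succ, Nat.sub_self,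
    show 2 * m + 2 - (2 * m + 1) = 1 by omega]
  simp only [pow_one, hY0, mul_zero, zero_mul, add_zero, pow_zero, integral_const, probReal_univ,
    smul_eq_mul, mul_one, Nat.choose_self, Nat.cast_one]
  linarith

theorem exists_integral_add_sum_pow_le {Y : ℕ → Ω → ℝ} (hindep : iIndepFun Y P)
    (hident : ∀ i, IdentDistrib (Y i) (Y 0) P P) (hmean : ∫ ω, Y 0 ω ∂P = 0) (c : ℝ) :
    ∀ m : ℕ, MemLp (Y 0) (2 * m : ℕ) P → ∃ a ≥ 0, ∀ n : ℕ,
      ∫ ω, (c + ∑ i ∈ Finset.range n, Y i ω) ^ (2 * m) ∂P ≤ a * ((n : ℝ) + 1) ^ m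
  | 0, _ => ⟨1, zero_le_one, fun n => by simp⟩
  | m + 1, hY => by
    have hYi : ∀ i, MemLp (Y i) (2 * m + 2 : ℕ) P := fun i => (hident i).memLp_iff.mpr hY
    obtain ⟨a, ha, hA⟩ := exists_integral_add_sum_pow_le hindep hident hmean c m
      (hY.mono_exponent (by exact_mod_cast (by omega : 2 * m ≤ 2 * (m + 1))))
    set S : ℕ → Ω → ℝ := fun n ω => c + ∑ i ∈ Finset.range n, Y i ω with hS_def
    have hS : ∀ n, MemLp (S n) (2 * m + 2 : ℕ) P := fun n =>
      (memLp_const c).add (memLp_finsetSum _ fun i _ => hYi i)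
    have hSY : ∀ n, IndepFun (S n) (Y n) P := fun n => by
      simpa only [Function.comp_def, Finset.sum_apply, id] using
        (hindep.indepFun_finsetSum_of_notMem₀ (fun i => (hident i).aemeasurable_fst)
          Finset.notMem_range_self).comp (measurable_const_add c) measurable_id
    have hS_even : ∀ n ω, |S n ω| ^ (2 * m) = S n ω ^ (2 * m) := fun n ω =>
      (even_two_mul m).pow_abs _
    set M := ∫ ω, |Y 0 ω| ^ (2 * m + 2) ∂P
    refine ⟨∫ ω, S 0 ω ^ (2 * m + 2) ∂P + 2 ^ (2 * m + 2) * (1 + a) * (1 + M),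
      add_nonneg (integral_nonneg fun ω => (even_two_mul (m + 1)).pow_nonneg _) (by positivity),
      fun n => ?_⟩
    refine le_mul_succ_pow_of_le_add (u := fun n => ∫ ω, S n ω ^ (2 * m + 2) ∂P)
      (integral_nonneg fun ω => (even_two_mul (m + 1)).pow_nonneg _) (by positivity) (fun n => ?_) n
    have hone : 1 ≤ ((n : ℝ) + 1) ^ m := one_le_pow₀ (by linarith [n.cast_nonneg (α := ℝ)])
    calc ∫ ω, S (n + 1) ω ^ (2 * m + 2) ∂P = ∫ ω, (S n ω + Y n ω) ^ (2 * m + 2) ∂P := by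
          simp only [hS_def, Finset.sum_range_succ, add_assoc]
      _ ≤ ∫ ω, S n ω ^ (2 * m + 2) ∂P + 2 ^ (2 * m + 2) *
            ((1 + ∫ ω, |S n ω| ^ (2 * m) ∂P) * (1 + ∫ ω, |Y n ω| ^ (2 * m + 2) ∂P)) :=
          (hSY n).integral_add_pow_le (hS n) (hYi n) ((hident n).integral_eq.trans hmean)
      _ ≤ ∫ ω, S n ω ^ (2 * m + 2) ∂P + 2 ^ (2 * m + 2) *
            (((1 + a) * ((n : ℝ) + 1) ^ m) * (1 + M)) := by
          have hMn : ∫ ω, |Y n ω| ^ (2 * m + 2) ∂P = M :=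
            ((hident n).comp (measurable_id.abs.pow_const _)).integral_eq
          simp only [hS_even, hMn]
          gcongr
          linarith [hA n]
      _ = _ := by ring

end Moments

theorem mlEst_deviation_probability_general
    {Ω : Type} [MeasurableSpace Ω] (P : Measure Ω) [IsProbabilityMeasure P]
    (X : ℕ → Ω → ℝ)
    (hindep : iIndepFun X P)
    (hident : ∀ i, IdentDistrib (X i) (X 0) P P)
    (n0 : ℝ) (hn0 : 0 < n0) (x0 : ℝ)
    (k : ℕ) (hk : Even k)
    (hmom : ∀ j ≤ k, Integrable (fun ω => |X 0 ω| ^ j) P)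
    (μstar : ℝ) (hμstar : μstar = ∫ ω, X 0 ω ∂P) :
    ∃ C : ℝ, ∃ N : ℕ, ∀ n ≥ N, ∀ δ : ℝ, 0 < δ →
      (P {ω | δ ≤ |(n0 * x0 + ∑ i ∈ Finset.range n, X i ω) / ((n : ℝ) + n0) - μstar|}).toReal
        ≤ C * ((n : ℝ) ^ (k / 2 : ℕ))⁻¹ * (δ ^ k)⁻¹ := by
  obtain ⟨m, rfl⟩ : 2 ∣ k := hk.two_dvd
  set Y : ℕ → Ω → ℝ := fun i ω => X i ω - μstar
  have hY : ∀ i, MemLp (Y i) (2 * m : ℕ) P := fun i =>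
    ((hident i).memLp_iff.mpr (memLp_of_integrable_abs_pow
      (hident 0).aemeasurable_fst.aestronglyMeasurable (hmom _ le_rfl))).sub (memLp_const μstar)
  obtain ⟨a, ha, hA⟩ := exists_integral_add_sum_pow_le
    (hindep.comp (fun _ x => x - μstar) fun _ => measurable_sub_const μstar)
    (fun i => (hident i).comp (measurable_sub_const μstar))
    (hμstar ▸ integral_sub_integral_eq_zero (X 0)) (n0 * (x0 - μstar)) m (hY 0)
  refine ⟨2 ^ m * a, 1, fun n hn δ hδ => ?_⟩
  have hn1 : (1 : ℝ) ≤ n := by exact_mod_cast hn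
  have hS : MemLp (fun ω => n0 * (x0 - μstar) + ∑ i ∈ Finset.range n, Y i ω) (2 * m : ℕ) P :=
    (memLp_const (n0 * (x0 - μstar))).add (memLp_finsetSum _ fun i _ => hY i)
  simp_rw [add_sum_div_sub_eq _ n (by linarith : (n : ℝ) + n0 ≠ 0), show 2 * m / 2 = m by omega,
    ← measureReal_def]
  calc _ ≤ (∫ ω, (n0 * (x0 - μstar) + ∑ i ∈ Finset.range n, Y i ω) ^ (2 * m) ∂P)
          / ((n : ℝ) + n0) ^ (2 * m) / δ ^ (2 * m) :=
        measureReal_abs_div_ge_le hS _ hδ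
    _ ≤ a * (((n : ℝ) + 1) ^ m / ((n : ℝ) + n0) ^ (2 * m)) * (δ ^ (2 * m))⁻¹ := by
        rw [mul_div_assoc', div_eq_mul_inv _ (δ ^ _)]
        gcongr
        exact hA n
    _ ≤ a * (2 ^ m * ((n : ℝ) ^ m)⁻¹) * (δ ^ (2 * m))⁻¹ := by
        gcongr
        exact succ_pow_div_add_pow_le hn1 hn0 m
    _ = 2 ^ m * a * ((n : ℝ) ^ m)⁻¹ * (δ ^ (2 * m))⁻¹ := by ring

/-- **Theorem 4 (deviation probability of the modified ML estimator; Grünwald–de Rooij).**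
Let `X_0, X_1, X_2, …` be i.i.d. real random variables, let `n₀ > 0` and `x₀` be constants,
define `μ̂_n := (n₀·x₀ + ∑_{i<n} X_i)/(n + n₀)` and `μ* := E[X]`.  Let `k` be an even
nonnegative integer.  If the first `k` moments of `X` exist, then for every `δ > 0`,
`P(|μ̂_n − μ*| ≥ δ) = O(n^{−⌈k/2⌉} δ^{−k})` as `n → ∞`, uniformly in `δ`.
(Since `k` is even, `⌈k/2⌉ = k/2`.) -/
theorem mlEst_deviation_probability
    {Ω : Type} [MeasurableSpace Ω] (P : Measure Ω) [IsProbabilityMeasure P]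
    (X : ℕ → Ω → ℝ) (hmeas : ∀ i, Measurable (X i))
    (hindep : iIndepFun X P)
    (hident : ∀ i, IdentDistrib (X i) (X 0) P P)
    (n0 : ℝ) (hn0 : 0 < n0) (x0 : ℝ)
    (k : ℕ) (hk : Even k)
    (hmom : ∀ j ≤ k, Integrable (fun ω => |X 0 ω| ^ j) P)
    (μstar : ℝ) (hμstar : μstar = ∫ ω, X 0 ω ∂P) :
    ∃ C : ℝ, ∃ N : ℕ, ∀ n ≥ N, ∀ δ : ℝ, 0 < δ →
      (P {ω | δ ≤ |(n0 * x0 + ∑ i ∈ Finset.range n, X i ω) / ((n : ℝ) + n0) - μstar|}).toReal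
        ≤ C * ((n : ℝ) ^ (k / 2 : ℕ))⁻¹ * (δ ^ k)⁻¹ :=
  mlEst_deviation_probability_general P X hindep hident n0 hn0 x0 k hk hmom μstar hμstar
end

section
/- Let M be a single-parameter regular exponential family with sufficient statistic X, Fisher information I_M(μ) (mean-value parameterization), and let μ̂_n ∈ Θ_mean. Let M'_{μ̂_n}(z) := M_{μ̂_n}(z) · (1 + (1/(2n)) I_M(μ̂_n)(X(z) − μ̂_n)²) / (1 + 1/(2n)) be the slightly squashed ML estimator. Then the Kullback-Leibler divergence D(M'_{μ̂_n} ‖ M_{μ̂_n}) = O(1/n) as n → ∞ (uniformly for μ̂_n in any fixed compact subset of Θ_mean). -/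
/-!
Write `a = 1/(2n)` and `s = a I(μ) (X - μ)²`, so that `M'_μ = M_μ (1 + s) / (1 + a)`. Since
`|log ((1 + s) / (1 + a))| ≤ s + a`, the integrand of `D(M'_μ ‖ M_μ)` is at most
`M_μ (1 + s) (s + a)`, whose integral is `a (2 + a + a κ(μ))` with `κ(μ) = E_μ[(X - μ)⁴] I(μ)²`
the kurtosis of `X`. It remains to bound the kurtosis uniformly on `K`.

The natural parameter is strictly decreasing in the mean, so the natural parameters of `K` lie in
an interval `[α, β]` whose `d`-neighbourhood still consists of natural parameters of the family.
On `[α, β]`, `|X - μ|^k e^{-cX} h` is dominated by a multiple of `(e^{-(α-d)X} + e^{-(β+d)X}) h`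
(via `|y|^k ≤ k!/d^k (e^{dy} + e^{-dy})`), which bounds fourth moments and normalizers; and
`∫ (X - μ)² e^{-cX} h ≥ ∫ (X - μ)² min(e^{-αX}, e^{-βX}) h`, a quadratic in `μ` that is positive
because `X` is not a.e. constant, bounds the variance from below.
-/

open MeasureTheory Filter Real Asymptotics ProbabilityTheory

/-- A single-parameter regular exponential family on outcome space `Z`, relative to a base
measure `ν`, given in its mean-value parameterization.  `Θ` is the mean-value parameter
space (an open interval), `X` the sufficient statistic, `carrier` the carrier `h`,
`natParam μ` the natural parameter corresponding to the mean value `μ`, `Znorm` the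
normalizing constant `Z(η)`, and `dens μ` the density of the member `M_μ` w.r.t. `ν`. -/
structure ExpFam (Z : Type) [MeasurableSpace Z] (ν : Measure Z) where
  Θ : Set ℝ
  Θ_open : IsOpen Θ
  Θ_ordConn : Θ.OrdConnected
  Θ_nonempty : Θ.Nonempty
  X : Z → ℝ
  X_meas : Measurable X
  carrier : Z → ℝ
  carrier_nonneg : ∀ z, 0 ≤ carrier z
  natParam : ℝ → ℝ
  Znorm : ℝ → ℝ
  Znorm_pos : ∀ μ ∈ Θ, 0 < Znorm (natParam μ)
  dens : ℝ → Z → ℝ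
  dens_def : ∀ μ ∈ Θ, ∀ z,
    dens μ z = Real.exp (-(natParam μ) * X z) * carrier z / Znorm (natParam μ)
  dens_meas : ∀ μ, Measurable (dens μ)
  dens_integrable : ∀ μ ∈ Θ, Integrable (dens μ) ν
  dens_integral_one : ∀ μ ∈ Θ, ∫ z, dens μ z ∂ν = 1
  mean_integrable : ∀ μ ∈ Θ, Integrable (fun z => X z * dens μ z) ν
  mean_eq : ∀ μ ∈ Θ, ∫ z, X z * dens μ z ∂ν = μ
  var_integrable : ∀ μ ∈ Θ, Integrable (fun z => (X z - μ) ^ 2 * dens μ z) ν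
  var_pos : ∀ μ ∈ Θ, 0 < ∫ z, (X z - μ) ^ 2 * dens μ z ∂ν

namespace ExpFam

variable {Z : Type} [MeasurableSpace Z] {ν : Measure Z}

/-- The member `M_μ` of the family, as a measure on `Z`. -/
noncomputable def toMeasure (F : ExpFam Z ν) (μ : ℝ) : Measure Z :=
  ν.withDensity (fun z => ENNReal.ofReal (F.dens μ z))

/-- The variance `var_{M_μ}(X)` of the sufficient statistic under the member with mean `μ`. -/
noncomputable def var (F : ExpFam Z ν) (μ : ℝ) : ℝ :=
  ∫ z, (F.X z - μ) ^ 2 * F.dens μ z ∂ν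

/-- Fisher information in the mean-value parameterization: `I(μ) = 1 / var_{M_μ}(X)`. -/
noncomputable def fisher (F : ExpFam Z ν) (μ : ℝ) : ℝ := (F.var μ)⁻¹

/-- Kullback-Leibler divergence `D(M_{μ₁} ‖ M_{μ₂})` between two members of the family. -/
noncomputable def kl (F : ExpFam Z ν) (μ₁ μ₂ : ℝ) : ℝ :=
  ∫ z, F.dens μ₁ z * Real.log (F.dens μ₁ z / F.dens μ₂ z) ∂ν

end ExpFam

/-- The prefix `z^i = (z_1, …, z_i)` of a tuple `z^n`, for `i : Fin n`. -/
def prefixOf {Z : Type} {n : ℕ} (zs : Fin n → Z) (i : Fin n) : Fin i.val → Z :=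
  fun j => zs (Fin.castLE i.isLt.le j)

/-- Codelength `L_U(z^n) = ∑_{i<n} - ln M_{μ̄_i(z^i)}(z_{i+1})` of the plug-in universal
code based on the estimator sequence `est`. -/
noncomputable def pluginCodelen {Z : Type} [MeasurableSpace Z] {ν : Measure Z}
    (F : ExpFam Z ν) (est : (n : ℕ) → (Fin n → Z) → ℝ) {n : ℕ} (zs : Fin n → Z) : ℝ :=
  ∑ i : Fin n, - Real.log (F.dens (est i.val (prefixOf zs i)) (zs i))

/-- Relative redundancy `R_U(n) = E_P[L_U(Z^n)] - inf_{μ ∈ Θ} E_P[- ln M_μ(Z^n)]` of the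
plug-in code based on `est`, when the data are i.i.d. `∼ P`. -/
noncomputable def pluginRedundancy {Z : Type} [MeasurableSpace Z] {ν : Measure Z}
    (F : ExpFam Z ν) (P : Measure Z) (est : (n : ℕ) → (Fin n → Z) → ℝ) (n : ℕ) : ℝ :=
  (∫ zs : Fin n → Z, pluginCodelen F est zs ∂(Measure.pi fun _ : Fin n => P)) -
    ⨅ μ : F.Θ, ∫ zs : Fin n → Z, ∑ i : Fin n, - Real.log (F.dens (μ : ℝ) (zs i))
      ∂(Measure.pi fun _ : Fin n => P)

/-- The slightly squashed version `M'_{μ̂}` of the member `M_{μ̂}`, at squashing level `n`: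
`M'_{μ̂}(z) = M_{μ̂}(z) · (1 + (1/(2n)) I_M(μ̂)(X(z) − μ̂)²) / (1 + 1/(2n))`. -/
noncomputable def squashDensAt {Z : Type} [MeasurableSpace Z] {ν : Measure Z}
    (F : ExpFam Z ν) (n : ℕ) (μhat : ℝ) (z : Z) : ℝ :=
  F.dens μhat z * (1 + (1 / (2 * (n : ℝ))) * F.fisher μhat * (F.X z - μhat) ^ 2) /
    (1 + 1 / (2 * (n : ℝ)))

open scoped Nat

namespace Real

theorem exp_neg_mul_le_add_of_mem_Icc {α β c : ℝ} (hc : c ∈ Set.Icc α β) (x : ℝ) :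
    exp (-c * x) ≤ exp (-α * x) + exp (-β * x) := by
  rcases le_total 0 x with hx | hx
  · exact (exp_le_exp.2 (by nlinarith [hc.1])).trans (le_add_of_nonneg_right (exp_pos _).le)
  · exact (exp_le_exp.2 (by nlinarith [hc.2])).trans (le_add_of_nonneg_left (exp_pos _).le)

theorem abs_pow_le_factorial_div_mul_exp_add (k : ℕ) {d : ℝ} (hd : 0 < d) (y : ℝ) :
    |y| ^ k ≤ k ! / d ^ k * (exp (d * y) + exp (-(d * y))) := by
  have hexp : exp (d * |y|) ≤ exp (d * y) + exp (-(d * y)) := by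
    rcases le_total 0 y with hy | hy
    · rw [abs_of_nonneg hy]
      exact le_add_of_nonneg_right (exp_pos _).le
    · rw [abs_of_nonpos hy, mul_neg]
      exact le_add_of_nonneg_left (exp_pos _).le
  calc |y| ^ k = k ! / d ^ k * ((d * |y|) ^ k / k !) := by
        field_simp
        ring
    _ ≤ k ! / d ^ k * (exp (d * y) + exp (-(d * y))) := by
        gcongr
        exact (pow_div_factorial_le_exp _ (by positivity) k).trans hexp

theorem sub_mul_exp_mul_le {t : ℝ} (ht : t ≤ 0) (x m : ℝ) :
    (x - m) * exp (t * x) ≤ (x - m) * exp (t * m) := by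
  rcases le_total m x with hx | hx
  · exact mul_le_mul_of_nonneg_left (exp_le_exp.2 (by nlinarith)) (sub_nonneg.2 hx)
  · exact mul_le_mul_of_nonpos_left (exp_le_exp.2 (by nlinarith)) (sub_nonpos.2 hx)

end Real

theorem abs_mul_log_squash_le {p a s : ℝ} (hp : 0 ≤ p) (ha : 0 ≤ a) (hs : 0 ≤ s) :
    |p * (1 + s) / (1 + a) * log (p * (1 + s) / (1 + a) / p)| ≤ p * ((1 + s) * (s + a)) := by
  rcases hp.eq_or_lt with rfl | hp
  · simp
  have hlog : |log ((1 + s) / (1 + a))| ≤ s + a := by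
    rw [log_div (by positivity) (by positivity), abs_le]
    constructor <;> linarith [log_le_sub_one_of_pos (show 0 < 1 + s by positivity),
      log_le_sub_one_of_pos (show 0 < 1 + a by positivity),
      log_nonneg (show 1 ≤ 1 + s by linarith), log_nonneg (show 1 ≤ 1 + a by linarith)]
  calc |p * (1 + s) / (1 + a) * log (p * (1 + s) / (1 + a) / p)|
      = p * (1 + s) / (1 + a) * |log ((1 + s) / (1 + a))| := by
        rw [abs_mul, abs_of_nonneg (by positivity)]
        congr 3
        field_simp
    _ ≤ p * (1 + s) * (s + a) :=
        mul_le_mul (div_le_self (by positivity) (by linarith)) hlog (abs_nonneg _) (by positivity)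
    _ = p * ((1 + s) * (s + a)) := by ring

section Integrals

variable {Z : Type} [MeasurableSpace Z] {ν : Measure Z}

theorem exists_pos_le_integral_sub_sq_mul {X w : Z → ℝ} (hw : ∀ z, 0 ≤ w z)
    (hw₀ : Integrable w ν) (hw₁ : Integrable (fun z => X z * w z) ν)
    (hw₂ : Integrable (fun z => X z ^ 2 * w z) ν) (hX : ∀ r, ¬ ∀ᵐ z ∂ν, w z = 0 ∨ X z = r) :
    ∃ v > 0, ∀ r, v ≤ ∫ z, (X z - r) ^ 2 * w z ∂ν := by
  set A := ∫ z, w z ∂ν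
  set B := ∫ z, X z * w z ∂ν
  set Q := ∫ z, X z ^ 2 * w z ∂ν
  have hsplit : ∀ r, (fun z => (X z - r) ^ 2 * w z) =
      fun z => X z ^ 2 * w z - 2 * r * (X z * w z) + r ^ 2 * w z := fun r => by
    funext z; ring
  have hint : ∀ r, Integrable (fun z => (X z - r) ^ 2 * w z) ν := fun r => by
    rw [hsplit]
    exact (hw₂.sub (hw₁.const_mul _)).add (hw₀.const_mul _)
  have hexpand : ∀ r, ∫ z, (X z - r) ^ 2 * w z ∂ν = Q - 2 * r * B + r ^ 2 * A := fun r => by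
    have h₂₁ : Integrable (fun z => X z ^ 2 * w z - 2 * r * (X z * w z)) ν :=
      hw₂.sub (hw₁.const_mul _)
    rw [hsplit, integral_add h₂₁ (hw₀.const_mul _), integral_sub hw₂ (hw₁.const_mul _),
      integral_const_mul, integral_const_mul]
  have hpos : ∀ r, 0 < ∫ z, (X z - r) ^ 2 * w z ∂ν := fun r => by
    refine (integral_nonneg fun z => mul_nonneg (sq_nonneg _) (hw z)).lt_of_ne fun h => hX r ?_
    filter_upwards [(integral_eq_zero_iff_of_nonneg
      (fun z => mul_nonneg (sq_nonneg _) (hw z)) (hint r)).1 h.symm] with z hz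
    rcases mul_eq_zero.1 hz with h | h
    · exact Or.inr (sub_eq_zero.1 (pow_eq_zero_iff two_ne_zero |>.1 h))
    · exact Or.inl h
  have hA : 0 < A := by
    refine (integral_nonneg hw).lt_of_ne fun h => hX 0 ?_
    filter_upwards [(integral_eq_zero_iff_of_nonneg hw hw₀).1 h.symm] with z hz
    exact Or.inl hz
  -- the quadratic `r ↦ Q - 2 r B + r² A` is minimal at `r = B / A`
  refine ⟨_, hpos (B / A), fun r => ?_⟩
  rw [hexpand, hexpand]
  have : Q - 2 * r * B + r ^ 2 * A - (Q - 2 * (B / A) * B + (B / A) ^ 2 * A) =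
      A * (r - B / A) ^ 2 := by
    field_simp
    ring
  nlinarith [sq_nonneg (r - B / A)]

theorem abs_integral_squash_mul_log_le {p Y : Z → ℝ} (hp : ∀ z, 0 ≤ p z) (hpi : Integrable p ν)
    (hp₁ : ∫ z, p z ∂ν = 1) (hY₂ : Integrable (fun z => Y z ^ 2 * p z) ν)
    (hY₄ : Integrable (fun z => Y z ^ 4 * p z) ν) {a I : ℝ} (ha : 0 ≤ a)
    (hI : I * ∫ z, Y z ^ 2 * p z ∂ν = 1) :
    |∫ z, p z * (1 + a * I * Y z ^ 2) / (1 + a) *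
        log (p z * (1 + a * I * Y z ^ 2) / (1 + a) / p z) ∂ν| ≤
      a * (2 + a + a * (I ^ 2 * ∫ z, Y z ^ 4 * p z ∂ν)) := by
  have hI₀ : 0 ≤ I := by
    have : 0 ≤ ∫ z, Y z ^ 2 * p z ∂ν := integral_nonneg fun z => mul_nonneg (sq_nonneg _) (hp z)
    nlinarith
  have hY₂' := hY₂.const_mul (a * I + a ^ 2 * I)
  have hpi' := hpi.const_mul a
  have hY₄' := hY₄.const_mul ((a * I) ^ 2)
  have h₂₀ : Integrable (fun z => (a * I + a ^ 2 * I) * (Y z ^ 2 * p z) + a * p z) ν :=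
    hY₂'.add hpi'
  calc _ ≤ ∫ z, |p z * (1 + a * I * Y z ^ 2) / (1 + a) *
          log (p z * (1 + a * I * Y z ^ 2) / (1 + a) / p z)| ∂ν := abs_integral_le_integral_abs
    _ ≤ ∫ z, ((a * I + a ^ 2 * I) * (Y z ^ 2 * p z) + a * p z +
          (a * I) ^ 2 * (Y z ^ 4 * p z)) ∂ν := by
        refine integral_mono_of_nonneg (ae_of_all _ fun _ => abs_nonneg _)
          (h₂₀.add hY₄') (ae_of_all _ fun z => ?_)
        refine (abs_mul_log_squash_le (hp z) ha
          (mul_nonneg (mul_nonneg ha hI₀) (sq_nonneg (Y z)))).trans_eq ?_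
        ring
    _ = (a * I + a ^ 2 * I) * ∫ z, Y z ^ 2 * p z ∂ν + a +
          (a * I) ^ 2 * ∫ z, Y z ^ 4 * p z ∂ν := by
        rw [integral_add h₂₀ hY₄', integral_add hY₂' hpi', integral_const_mul,
          integral_const_mul, integral_const_mul, hp₁, mul_one]
    _ = a * (2 + a + a * (I ^ 2 * ∫ z, Y z ^ 4 * p z ∂ν)) := by
        linear_combination (a + a ^ 2) * hI

end Integrals

namespace ExpFam

variable {Z : Type} [MeasurableSpace Z] {ν : Measure Z} (M : ExpFam Z ν)

noncomputable def unnormDens (η : ℝ) (z : Z) : ℝ := exp (-η * M.X z) * M.carrier z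

theorem unnormDens_nonneg (η : ℝ) (z : Z) : 0 ≤ M.unnormDens η z :=
  mul_nonneg (exp_pos _).le (M.carrier_nonneg z)

theorem carrier_eq_zero_of_unnormDens_eq_zero {η : ℝ} {z : Z} (h : M.unnormDens η z = 0) :
    M.carrier z = 0 :=
  (mul_eq_zero.1 h).resolve_left (exp_pos _).ne'

theorem exp_mul_unnormDens (t c : ℝ) (z : Z) :
    exp (t * M.X z) * M.unnormDens c z = M.unnormDens (c - t) z := by
  rw [unnormDens, unnormDens, ← mul_assoc, ← exp_add]
  ring_nf

theorem unnormDens_le_add_of_mem_Icc {α β c : ℝ} (hc : c ∈ Set.Icc α β) (z : Z) :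
    M.unnormDens c z ≤ M.unnormDens α z + M.unnormDens β z := by
  simpa only [unnormDens, ← add_mul] using
    mul_le_mul_of_nonneg_right (exp_neg_mul_le_add_of_mem_Icc hc (M.X z)) (M.carrier_nonneg z)

theorem min_unnormDens_le_of_mem_Icc {α β c : ℝ} (hc : c ∈ Set.Icc α β) (z : Z) :
    min (M.unnormDens α z) (M.unnormDens β z) ≤ M.unnormDens c z := by
  rcases le_total 0 (M.X z) with hx | hx
  · refine (min_le_right _ _).trans (mul_le_mul_of_nonneg_right ?_ (M.carrier_nonneg z))
    exact exp_le_exp.2 (by nlinarith [hc.2])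
  · refine (min_le_left _ _).trans (mul_le_mul_of_nonneg_right ?_ (M.carrier_nonneg z))
    exact exp_le_exp.2 (by nlinarith [hc.1])

theorem dens_eq_unnormDens_div {μ : ℝ} (hμ : μ ∈ M.Θ) (z : Z) :
    M.dens μ z = M.unnormDens (M.natParam μ) z / M.Znorm (M.natParam μ) :=
  M.dens_def μ hμ z

theorem dens_nonneg {μ : ℝ} (hμ : μ ∈ M.Θ) (z : Z) : 0 ≤ M.dens μ z := by
  rw [M.dens_eq_unnormDens_div hμ]
  exact div_nonneg (M.unnormDens_nonneg _ z) (M.Znorm_pos μ hμ).le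

theorem unnormDens_natParam {μ : ℝ} (hμ : μ ∈ M.Θ) :
    M.unnormDens (M.natParam μ) = fun z => M.Znorm (M.natParam μ) * M.dens μ z := by
  funext z
  rw [M.dens_eq_unnormDens_div hμ, mul_div_cancel₀ _ (M.Znorm_pos μ hμ).ne']

theorem integrable_unnormDens_natParam {μ : ℝ} (hμ : μ ∈ M.Θ) :
    Integrable (M.unnormDens (M.natParam μ)) ν := by
  rw [M.unnormDens_natParam hμ]
  exact (M.dens_integrable μ hμ).const_mul _

theorem integral_unnormDens_natParam {μ : ℝ} (hμ : μ ∈ M.Θ) :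
    ∫ z, M.unnormDens (M.natParam μ) z ∂ν = M.Znorm (M.natParam μ) := by
  rw [M.unnormDens_natParam hμ, integral_const_mul, M.dens_integral_one μ hμ, mul_one]

theorem integrable_mul_dens {μ : ℝ} (hμ : μ ∈ M.Θ) {f : Z → ℝ}
    (hf : Integrable (fun z => f z * M.unnormDens (M.natParam μ) z) ν) :
    Integrable (fun z => f z * M.dens μ z) ν := by
  simp_rw [M.dens_eq_unnormDens_div hμ, ← mul_div_assoc]
  exact hf.div_const _

theorem integral_mul_dens {μ : ℝ} (hμ : μ ∈ M.Θ) (f : Z → ℝ) :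
    ∫ z, f z * M.dens μ z ∂ν =
      (∫ z, f z * M.unnormDens (M.natParam μ) z ∂ν) / M.Znorm (M.natParam μ) := by
  simp_rw [M.dens_eq_unnormDens_div hμ, ← mul_div_assoc]
  exact integral_div _ _

theorem measurable_carrier : Measurable M.carrier := by
  obtain ⟨μ, hμ⟩ := M.Θ_nonempty
  have : M.carrier =
      fun z => exp (M.natParam μ * M.X z) * (M.Znorm (M.natParam μ) * M.dens μ z) := by
    funext z
    rw [← congrFun (M.unnormDens_natParam hμ) z, exp_mul_unnormDens, sub_self, unnormDens,
      neg_zero, zero_mul, exp_zero, one_mul]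
  rw [this]
  exact (M.X_meas.const_mul _).exp.mul ((M.dens_meas μ).const_mul _)

theorem measurable_unnormDens (η : ℝ) : Measurable (M.unnormDens η) :=
  (M.X_meas.const_mul _).exp.mul M.measurable_carrier

theorem integrable_sub_mul_dens {μ : ℝ} (hμ : μ ∈ M.Θ) (r : ℝ) :
    Integrable (fun z => (M.X z - r) * M.dens μ z) ν := by
  simp_rw [sub_mul]
  exact (M.mean_integrable μ hμ).sub ((M.dens_integrable μ hμ).const_mul r)

theorem integral_sub_mul_dens {μ : ℝ} (hμ : μ ∈ M.Θ) (r : ℝ) :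
    ∫ z, (M.X z - r) * M.dens μ z ∂ν = μ - r := by
  simp_rw [sub_mul]
  rw [integral_sub (M.mean_integrable μ hμ) ((M.dens_integrable μ hμ).const_mul r),
    integral_const_mul, M.mean_eq μ hμ, M.dens_integral_one μ hμ, mul_one]

-- Tilting `M_{μ₁}` by the decreasing weight `e^{(η₁ - η₂) X}` can only lower the mean.
theorem le_of_natParam_le {μ₁ μ₂ : ℝ} (h₁ : μ₁ ∈ M.Θ) (h₂ : μ₂ ∈ M.Θ)
    (h : M.natParam μ₁ ≤ M.natParam μ₂) : μ₂ ≤ μ₁ := by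
  set t := M.natParam μ₁ - M.natParam μ₂
  set κ := M.Znorm (M.natParam μ₁) / M.Znorm (M.natParam μ₂)
  have hκ : 0 < κ := div_pos (M.Znorm_pos μ₁ h₁) (M.Znorm_pos μ₂ h₂)
  have hdens : ∀ z, M.dens μ₂ z = κ * (exp (t * M.X z) * M.dens μ₁ z) := fun z => by
    rw [M.dens_eq_unnormDens_div h₁, M.dens_eq_unnormDens_div h₂, mul_div_assoc',
      exp_mul_unnormDens, sub_sub_cancel]
    simp only [κ]
    field_simp [(M.Znorm_pos μ₁ h₁).ne']
  have key : μ₂ - μ₁ ≤ κ * exp (t * μ₁) * (μ₁ - μ₁) := by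
    rw [← M.integral_sub_mul_dens h₂, ← M.integral_sub_mul_dens h₁, ← integral_const_mul]
    refine integral_mono (M.integrable_sub_mul_dens h₂ μ₁)
      ((M.integrable_sub_mul_dens h₁ μ₁).const_mul _) fun z => ?_
    have := mul_le_mul_of_nonneg_left (mul_le_mul_of_nonneg_right
      (sub_mul_exp_mul_le (sub_nonpos.2 h) (M.X z) μ₁) (M.dens_nonneg h₁ z)) hκ.le
    calc (M.X z - μ₁) * M.dens μ₂ z = κ * ((M.X z - μ₁) * exp (t * M.X z) * M.dens μ₁ z) := by
          rw [hdens]; ring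
      _ ≤ κ * ((M.X z - μ₁) * exp (t * μ₁) * M.dens μ₁ z) := this
      _ = κ * exp (t * μ₁) * ((M.X z - μ₁) * M.dens μ₁ z) := by ring
  linarith

theorem natParam_strictAntiOn : StrictAntiOn M.natParam M.Θ :=
  fun _ h₁ _ h₂ hlt => lt_of_not_ge fun h => (M.le_of_natParam_le h₁ h₂ h).not_gt hlt

theorem not_ae_carrier_eq_zero_or_X_eq (r : ℝ) :
    ¬ ∀ᵐ z ∂ν, M.carrier z = 0 ∨ M.X z = r := by
  intro h
  obtain ⟨μ, hμ⟩ := M.Θ_nonempty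
  have hdens : ∀ᵐ z ∂ν, M.dens μ z = 0 ∨ M.X z = r := h.mono fun z hz => hz.imp_left
    fun h0 => by rw [M.dens_def μ hμ z, h0, mul_zero, zero_div]
  have hr : μ = r := by
    have := M.integral_sub_mul_dens hμ r
    rw [integral_eq_zero_of_ae (hdens.mono fun z hz => ?_)] at this
    · linarith
    rcases hz with hz | hz <;> simp [hz]
  have := M.var_pos μ hμ
  rw [integral_eq_zero_of_ae (hdens.mono fun z hz => ?_)] at this
  · exact this.false
  rcases hz with hz | hz <;> simp [hz, ← hr]

noncomputable def kurtosis (μ : ℝ) : ℝ :=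
  M.fisher μ ^ 2 * ∫ z, (M.X z - μ) ^ 4 * M.dens μ z ∂ν

theorem abs_sub_pow_mul_unnormDens_le (k : ℕ) {d : ℝ} (hd : 0 < d) (c r : ℝ) (z : Z) :
    |M.X z - r| ^ k * M.unnormDens c z ≤
      k ! / d ^ k * exp (d * |r|) * (M.unnormDens (c - d) z + M.unnormDens (c + d) z) := by
  have hshift : ∀ t, |t| ≤ d →
      exp (t * (M.X z - r)) * M.unnormDens c z ≤ exp (d * |r|) * M.unnormDens (c - t) z :=
    fun t ht => by
      calc exp (t * (M.X z - r)) * M.unnormDens c z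
          = exp (-(t * r)) * M.unnormDens (c - t) z := by
            rw [← exp_mul_unnormDens, ← mul_assoc, ← exp_add]
            ring_nf
        _ ≤ exp (d * |r|) * M.unnormDens (c - t) z := by
            gcongr
            · exact M.unnormDens_nonneg _ z
            calc -(t * r) ≤ |t| * |r| := (neg_le_abs _).trans (abs_mul t r).le
              _ ≤ d * |r| := by gcongr
  calc |M.X z - r| ^ k * M.unnormDens c z
      ≤ k ! / d ^ k * (exp (d * (M.X z - r)) + exp (-(d * (M.X z - r)))) *
          M.unnormDens c z := by
        gcongr
        · exact M.unnormDens_nonneg c z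
        exact abs_pow_le_factorial_div_mul_exp_add k hd _
    _ = k ! / d ^ k * (exp (d * (M.X z - r)) * M.unnormDens c z +
          exp (-d * (M.X z - r)) * M.unnormDens c z) := by
        rw [neg_mul]
        ring
    _ ≤ k ! / d ^ k * (exp (d * |r|) * M.unnormDens (c - d) z +
          exp (d * |r|) * M.unnormDens (c - -d) z) := by
        refine mul_le_mul_of_nonneg_left (add_le_add (hshift d (abs_of_pos hd).le) ?_)
          (by positivity)
        exact hshift (-d) (by rw [abs_neg, abs_of_pos hd])
    _ = k ! / d ^ k * exp (d * |r|) * (M.unnormDens (c - d) z + M.unnormDens (c + d) z) := by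
        rw [sub_neg_eq_add]
        ring

theorem abs_sub_pow_mul_unnormDens_le_of_mem_Icc (k : ℕ) {α β c d : ℝ} (hd : 0 < d)
    (hc : c ∈ Set.Icc α β) (r : ℝ) (z : Z) :
    |(M.X z - r) ^ k * M.unnormDens c z| ≤
      2 * (k ! / d ^ k * exp (d * |r|)) *
        (M.unnormDens (α - d) z + M.unnormDens (β + d) z) := by
  rw [abs_mul, abs_pow, abs_of_nonneg (M.unnormDens_nonneg c z)]
  refine (M.abs_sub_pow_mul_unnormDens_le k hd c r z).trans ?_
  calc k ! / d ^ k * exp (d * |r|) * (M.unnormDens (c - d) z + M.unnormDens (c + d) z)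
      ≤ k ! / d ^ k * exp (d * |r|) *
          ((M.unnormDens (α - d) z + M.unnormDens (β + d) z) +
            (M.unnormDens (α - d) z + M.unnormDens (β + d) z)) := by
        gcongr <;> refine M.unnormDens_le_add_of_mem_Icc ⟨?_, ?_⟩ z <;> linarith [hc.1, hc.2]
    _ = _ := by ring

theorem integrable_sub_pow_mul_unnormDens (k : ℕ) {α β c d : ℝ} (hd : 0 < d)
    (hlo : Integrable (M.unnormDens (α - d)) ν) (hhi : Integrable (M.unnormDens (β + d)) ν)
    (hc : c ∈ Set.Icc α β) (r : ℝ) :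
    Integrable (fun z => (M.X z - r) ^ k * M.unnormDens c z) ν :=
  ((hlo.add hhi).const_mul _).mono'
    (((M.X_meas.sub_const r).pow_const k).mul (M.measurable_unnormDens c)).aestronglyMeasurable
    (ae_of_all _ fun z => M.abs_sub_pow_mul_unnormDens_le_of_mem_Icc k hd hc r z)

theorem exists_pos_le_integral_sub_sq_mul_unnormDens {α β d : ℝ} (hd : 0 < d) (hαβ : α ≤ β)
    (hlo : Integrable (M.unnormDens (α - d)) ν) (hhi : Integrable (M.unnormDens (β + d)) ν) :
    ∃ v > 0, ∀ c ∈ Set.Icc α β, ∀ r, v ≤ ∫ z, (M.X z - r) ^ 2 * M.unnormDens c z ∂ν := by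
  set w := fun z => min (M.unnormDens α z) (M.unnormDens β z)
  have hw : ∀ z, 0 ≤ w z := fun z => le_min (M.unnormDens_nonneg α z) (M.unnormDens_nonneg β z)
  have hmom : ∀ k : ℕ, Integrable (fun z => M.X z ^ k * w z) ν := fun k => by
    refine (M.integrable_sub_pow_mul_unnormDens k hd hlo hhi ⟨le_rfl, hαβ⟩ 0).mono
      ((M.X_meas.pow_const k).mul
        ((M.measurable_unnormDens α).min (M.measurable_unnormDens β))).aestronglyMeasurable
      (ae_of_all _ fun z => ?_)
    simp only [sub_zero, norm_mul, Real.norm_of_nonneg (hw z),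
      Real.norm_of_nonneg (M.unnormDens_nonneg α z)]
    exact mul_le_mul_of_nonneg_left (min_le_left _ _) (norm_nonneg _)
  have hX : ∀ r, ¬ ∀ᵐ z ∂ν, w z = 0 ∨ M.X z = r := fun r h =>
    M.not_ae_carrier_eq_zero_or_X_eq r <| h.mono fun z hz => hz.imp_left fun hz => by
      rcases min_choice (M.unnormDens α z) (M.unnormDens β z) with h | h <;>
        exact M.carrier_eq_zero_of_unnormDens_eq_zero (h.symm.trans hz)
  obtain ⟨v, hv, hle⟩ := exists_pos_le_integral_sub_sq_mul hw (by simpa using hmom 0)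
    (by simpa using hmom 1) (hmom 2) hX
  refine ⟨v, hv, fun c hc r => (hle r).trans (integral_mono_of_nonneg
    (ae_of_all _ fun z => mul_nonneg (sq_nonneg _) (hw z))
    (M.integrable_sub_pow_mul_unnormDens 2 hd hlo hhi hc r) (ae_of_all _ fun z => ?_))⟩
  exact mul_le_mul_of_nonneg_left (M.min_unnormDens_le_of_mem_Icc hc z) (sq_nonneg _)

theorem exists_kurtosis_le_of_natParam_mem_Icc {α β d : ℝ} (hd : 0 < d) (hαβ : α ≤ β)
    (hlo : Integrable (M.unnormDens (α - d)) ν) (hhi : Integrable (M.unnormDens (β + d)) ν)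
    (R : ℝ) :
    ∃ κ, ∀ μ ∈ M.Θ, M.natParam μ ∈ Set.Icc α β → |μ| ≤ R →
      Integrable (fun z => (M.X z - μ) ^ 4 * M.dens μ z) ν ∧ M.kurtosis μ ≤ κ := by
  obtain ⟨v, hv, hvle⟩ := M.exists_pos_le_integral_sub_sq_mul_unnormDens hd hαβ hlo hhi
  set G := ∫ z, (M.unnormDens (α - d) z + M.unnormDens (β + d) z) ∂ν
  refine ⟨G * (2 * ((4 : ℕ) ! / d ^ 4 * exp (d * R)) * G) / v ^ 2, fun μ hμ hc hR =>
    ⟨M.integrable_mul_dens hμ (M.integrable_sub_pow_mul_unnormDens 4 hd hlo hhi hc μ), ?_⟩⟩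
  have hZ : M.Znorm (M.natParam μ) ≤ G := by
    rw [← M.integral_unnormDens_natParam hμ]
    refine integral_mono (M.integrable_unnormDens_natParam hμ) (hlo.add hhi) fun z => ?_
    exact M.unnormDens_le_add_of_mem_Icc ⟨by linarith [hc.1], by linarith [hc.2]⟩ z
  have h₄ : ∫ z, (M.X z - μ) ^ 4 * M.unnormDens (M.natParam μ) z ∂ν ≤
      2 * ((4 : ℕ) ! / d ^ 4 * exp (d * R)) * G := by
    rw [← integral_const_mul]
    refine integral_mono (M.integrable_sub_pow_mul_unnormDens 4 hd hlo hhi hc μ)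
      ((hlo.add hhi).const_mul _) fun z => (le_abs_self _).trans
        ((M.abs_sub_pow_mul_unnormDens_le_of_mem_Icc 4 hd hc μ z).trans ?_)
    gcongr
    exact add_nonneg (M.unnormDens_nonneg _ z) (M.unnormDens_nonneg _ z)
  have h₂ := hvle _ hc μ
  calc M.kurtosis μ
      = M.Znorm (M.natParam μ) * (∫ z, (M.X z - μ) ^ 4 * M.unnormDens (M.natParam μ) z ∂ν) /
          (∫ z, (M.X z - μ) ^ 2 * M.unnormDens (M.natParam μ) z ∂ν) ^ 2 := by
        rw [kurtosis, fisher, var, M.integral_mul_dens hμ, M.integral_mul_dens hμ]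
        field_simp [(M.Znorm_pos μ hμ).ne']
    _ ≤ _ := by
        have hG : 0 ≤ G := (M.Znorm_pos μ hμ).le.trans hZ
        refine div_le_div₀ (mul_nonneg hG (mul_nonneg (by positivity) hG))
          (mul_le_mul hZ h₄ ?_ hG) (pow_pos hv 2) (pow_le_pow_left₀ hv.le h₂ 2)
        exact integral_nonneg fun z => mul_nonneg (by positivity) (M.unnormDens_nonneg _ z)

theorem exists_natParam_mem_Icc_of_isCompact {K : Set ℝ} (hK : IsCompact K) (hne : K.Nonempty)
    (hKΘ : K ⊆ M.Θ) :
    ∃ α β d, 0 < d ∧ α ≤ β ∧ Integrable (M.unnormDens (α - d)) ν ∧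
      Integrable (M.unnormDens (β + d)) ν ∧ ∀ μ ∈ K, M.natParam μ ∈ Set.Icc α β := by
  have hl := hKΘ (hK.sInf_mem hne)
  have hu := hKΘ (hK.sSup_mem hne)
  obtain ⟨a, hal, ha⟩ := Filter.Eventually.exists_lt (M.Θ_open.mem_nhds hl)
  obtain ⟨b, hub, hb⟩ := Filter.Eventually.exists_gt (M.Θ_open.mem_nhds hu)
  have hη : ∀ μ ∈ K, M.natParam (sSup K) ≤ M.natParam μ ∧ M.natParam μ ≤ M.natParam (sInf K) :=
    fun μ hμ => ⟨M.natParam_strictAntiOn.antitoneOn (hKΘ hμ) hu (le_csSup hK.bddAbove hμ),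
      M.natParam_strictAntiOn.antitoneOn hl (hKΘ hμ) (csInf_le hK.bddBelow hμ)⟩
  have hb' := M.natParam_strictAntiOn hu hb hub
  have ha' := M.natParam_strictAntiOn ha hl hal
  set d := min (M.natParam (sSup K) - M.natParam b) (M.natParam a - M.natParam (sInf K))
  have hd₁ : d ≤ M.natParam (sSup K) - M.natParam b := min_le_left _ _
  have hd₂ : d ≤ M.natParam a - M.natParam (sInf K) := min_le_right _ _
  obtain ⟨μ₀, hμ₀⟩ := hne
  refine ⟨M.natParam b + d, M.natParam a - d, d, lt_min (by linarith) (by linarith),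
    by linarith [hη μ₀ hμ₀], ?_, ?_, fun μ hμ => ⟨by linarith [hη μ hμ], by linarith [hη μ hμ]⟩⟩
  · rw [add_sub_cancel_right]
    exact M.integrable_unnormDens_natParam hb
  · rw [sub_add_cancel]
    exact M.integrable_unnormDens_natParam ha

theorem exists_kurtosis_le_of_isCompact {K : Set ℝ} (hK : IsCompact K) (hKΘ : K ⊆ M.Θ) :
    ∃ κ, ∀ μ ∈ K,
      Integrable (fun z => (M.X z - μ) ^ 4 * M.dens μ z) ν ∧ M.kurtosis μ ≤ κ := by
  rcases K.eq_empty_or_nonempty with rfl | hne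
  · exact ⟨0, by simp⟩
  obtain ⟨α, β, d, hd, hαβ, hlo, hhi, hη⟩ := M.exists_natParam_mem_Icc_of_isCompact hK hne hKΘ
  obtain ⟨R, hR⟩ := hK.isBounded.exists_norm_le
  obtain ⟨κ, hκ⟩ := M.exists_kurtosis_le_of_natParam_mem_Icc hd hαβ hlo hhi R
  exact ⟨κ, fun μ hμ => hκ μ (hKΘ hμ) (hη μ hμ) (hR μ hμ)⟩

end ExpFam

/-- **The slightly squashed ML estimator is "almost in-model".**  Let `M` be a
single-parameter regular exponential family with Fisher information `I_M(μ)` in the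
mean-value parameterization.  Then the Kullback-Leibler divergence
`D(M'_{μ̂_n} ‖ M_{μ̂_n}) = O(1/n)` as `n → ∞`, uniformly for `μ̂_n` in any fixed compact
subset of `Θ_mean`. -/
theorem squashed_kl_isBigO
    {Z : Type} [MeasurableSpace Z] (ν : Measure Z)
    (M : ExpFam Z ν) (K : Set ℝ) (hK : IsCompact K) (hKΘ : K ⊆ M.Θ) :
    ∃ C : ℝ, ∃ N : ℕ, ∀ n ≥ N, ∀ μhat ∈ K,
      |∫ z, squashDensAt M n μhat z *
          Real.log (squashDensAt M n μhat z / M.dens μhat z) ∂ν| ≤ C / (n : ℝ) := by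
  obtain ⟨κ, hκ⟩ := M.exists_kurtosis_le_of_isCompact hK hKΘ
  refine ⟨(3 + κ) / 2, 1, fun n hn μ hμ => ?_⟩
  obtain ⟨h₄, hkurt⟩ := hκ μ hμ
  have hμΘ := hKΘ hμ
  have hkurt₀ : 0 ≤ M.kurtosis μ := mul_nonneg (sq_nonneg _)
    (integral_nonneg fun z => mul_nonneg (by positivity) (M.dens_nonneg hμΘ z))
  have ha₀ : 0 ≤ 1 / (2 * (n : ℝ)) := by positivity
  have ha₁ : 1 / (2 * (n : ℝ)) ≤ 1 := by
    rw [div_le_one (by positivity)]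
    linarith [(Nat.one_le_cast (α := ℝ)).2 hn]
  calc _ ≤ 1 / (2 * (n : ℝ)) * (2 + 1 / (2 * (n : ℝ)) + 1 / (2 * (n : ℝ)) * M.kurtosis μ) :=
        abs_integral_squash_mul_log_le (M.dens_nonneg hμΘ) (M.dens_integrable μ hμΘ)
          (M.dens_integral_one μ hμΘ) (M.var_integrable μ hμΘ) h₄ ha₀
          (inv_mul_cancel₀ (M.var_pos μ hμΘ).ne')
    _ ≤ 1 / (2 * (n : ℝ)) * (3 + κ) := by
        refine mul_le_mul_of_nonneg_left ?_ ha₀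
        nlinarith
    _ = (3 + κ) / 2 / n := by ring
end
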